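/- Let P, Q ⊆ ℕ be disjoint and inhabited. Then there exists a winning Arthur+Nimue strategy with partial computable Arthur strategy for the reduction game of the basic oracle {P ⊗ Q, Q ⊗ P} to the basic oracle {P, Q}, and also one for the reduction game of {P, Q} to {P ⊗ Q, Q ⊗ P}; i.e. the coding degrees c_{P⊗Q, Q⊗P} and c_{P,Q} are equal. -/

import Mathlib

open Classical in
/-- The oracle game: the list of previous answers by Merlin up to stage `i`,
for the answer sequence `s`. -/
def prefixList (s : ℕ → ℕ) (i : ℕ) : List ℕ := List.ofFn (fun j : Fin i => s j)

/-- A winning Arthur+Nimue strategy for the reduction game of the basic oracle `ℱ`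
to the basic oracle `𝒢`. -/
def Winning (ℱ 𝒢 : Set (Set ℕ)) (σ : List ℕ →. Option ℕ) (ν : Set ℕ → List ℕ → Set ℕ) : Prop :=
  (∀ F ∈ ℱ, ∀ l : List ℕ, ν F l ∈ 𝒢) ∧
  ∀ F ∈ ℱ, ∀ s : ℕ → ℕ, (∀ i, s i ∈ ν F (prefixList s i)) →
    ∃ k, (∀ i ≤ k, (σ (prefixList s i)).Dom) ∧
      (∀ i < k, none ∈ σ (prefixList s i)) ∧
      ∃ u ∈ F, some u ∈ σ (prefixList s k)

/-- The encoding of an Arthur strategy as a partial function `ℕ →. ℕ`, via the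
standard Mathlib encodings of `List ℕ` and `Option ℕ`. -/
def arthurCode (σ : List ℕ →. Option ℕ) : ℕ →. ℕ :=
  fun n => (σ (Denumerable.ofNat (List ℕ) n)).map Encodable.encode

open Classical in
/-- The decoding oracle associated to the promise problem `(P, Q)`: value `0` on `P`,
value `1` on `Q`, undefined elsewhere. -/
noncomputable def dOracle (P Q : Set ℕ) : ℕ →. ℕ :=
  fun n => ⟨n ∈ P ∪ Q, fun _ => if n ∈ Q then 1 else 0⟩

open Classical in
/-- The characteristic function of a set of naturals. -/
noncomputable def chi (A : Set ℕ) : ℕ → ℕ := fun n => if n ∈ A then 1 else 0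

/-- The coded cartesian product of two sets of naturals. -/
def tensor (P Q : Set ℕ) : Set ℕ := {x | ∃ p ∈ P, ∃ q ∈ Q, x = Nat.pair p q}

infixl:70 " ⊗ " => tensor

/-- Oracle computability, as in Mathlib's `Nat.RecursiveIn`. -/
inductive Nat.RecursiveInOne (g : ℕ →. ℕ) : (ℕ →. ℕ) → Prop
  | zero : Nat.RecursiveInOne g fun _ => 0
  | succ : Nat.RecursiveInOne g Nat.succ
  | left : Nat.RecursiveInOne g fun n => (Nat.unpair n).1
  | right : Nat.RecursiveInOne g fun n => (Nat.unpair n).2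
  | oracle : Nat.RecursiveInOne g g
  | pair {f h : ℕ →. ℕ} (hf : Nat.RecursiveInOne g f) (hh : Nat.RecursiveInOne g h) :
      Nat.RecursiveInOne g fun n => (Nat.pair <$> f n <*> h n)
  | comp {f h : ℕ →. ℕ} (hf : Nat.RecursiveInOne g f) (hh : Nat.RecursiveInOne g h) :
      Nat.RecursiveInOne g fun n => h n >>= f
  | prec {f h : ℕ →. ℕ} (hf : Nat.RecursiveInOne g f) (hh : Nat.RecursiveInOne g h) :
      Nat.RecursiveInOne g
        (Nat.unpaired fun a n =>
          n.rec (f a) fun y IH => do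
            let i ← IH
            h (Nat.pair a (Nat.pair y i)))
  | rfind {f : ℕ →. ℕ} (hf : Nat.RecursiveInOne g f) :
      Nat.RecursiveInOne g fun a =>
        Nat.rfind fun n => (fun m => m = 0) <$> f (Nat.pair a n)

/-- `f` is T1-reducible to `g`: some partial function recursive in the oracle `g`
extends `f`. -/
def T1Reducible (f g : ℕ →. ℕ) : Prop :=
  ∃ h : ℕ →. ℕ, Nat.RecursiveInOne g h ∧ ∀ n : ℕ, ∀ a ∈ f n, a ∈ h n

/-- `f` is T1-computable: it has a partial computable extension. -/
def T1Computable (f : ℕ →. ℕ) : Prop :=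
  ∃ h : ℕ →. ℕ, Nat.Partrec h ∧ ∀ n : ℕ, ∀ a ∈ f n, a ∈ h n

/-- Codes for oracle computations: Mathlib's `Nat.Partrec.Code` extended by an
`oracle` constructor. -/
inductive OCode : Type
  | zero : OCode
  | succ : OCode
  | left : OCode
  | right : OCode
  | oracle : OCode
  | pair : OCode → OCode → OCode
  | comp : OCode → OCode → OCode
  | prec : OCode → OCode → OCode
  | rfind' : OCode → OCode

/-- Evaluation of an oracle code relative to the oracle `g`, by the same structural
recursion as Mathlib's `Nat.Partrec.Code.eval`. -/
def OCode.eval (g : ℕ →. ℕ) : OCode → ℕ →. ℕ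
  | .zero => pure 0
  | .succ => Nat.succ
  | .left => ↑fun n : ℕ => n.unpair.1
  | .right => ↑fun n : ℕ => n.unpair.2
  | .oracle => g
  | .pair cf cg => fun n => Nat.pair <$> cf.eval g n <*> cg.eval g n
  | .comp cf cg => fun n => cg.eval g n >>= cf.eval g
  | .prec cf cg =>
    Nat.unpaired fun a n =>
      n.rec (cf.eval g a) fun y IH => do
        let i ← IH
        cg.eval g (Nat.pair a (Nat.pair y i))
  | .rfind' cf =>
    Nat.unpaired fun a m =>
      (Nat.rfind fun n => (fun m => m = 0) <$> cf.eval g (Nat.pair a (n + m))).map (· + m)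

/-- The `n`-th oracle code. -/
def OCode.ofNat : ℕ → OCode
  | 0 => .zero
  | 1 => .succ
  | 2 => .left
  | 3 => .right
  | 4 => .oracle
  | n + 5 =>
    have h1 : (n / 4).unpair.1 < n + 5 :=
      lt_of_le_of_lt (le_trans (Nat.unpair_left_le _) (Nat.div_le_self _ _)) (by omega)
    have h2 : (n / 4).unpair.2 < n + 5 :=
      lt_of_le_of_lt (le_trans (Nat.unpair_right_le _) (Nat.div_le_self _ _)) (by omega)
    if n % 4 = 0 then .pair (OCode.ofNat (n / 4).unpair.1) (OCode.ofNat (n / 4).unpair.2)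
    else if n % 4 = 1 then .comp (OCode.ofNat (n / 4).unpair.1) (OCode.ofNat (n / 4).unpair.2)
    else if n % 4 = 2 then .prec (OCode.ofNat (n / 4).unpair.1) (OCode.ofNat (n / 4).unpair.2)
    else .rfind' (OCode.ofNat (n / 4).unpair.1)

/-- `φ_e^g`: the evaluation of the `e`-th oracle code relative to the oracle `g`. -/
def phi (g : ℕ →. ℕ) (e : ℕ) : ℕ →. ℕ := (OCode.ofNat e).eval g

/-- `H_i^A`: the set of (codes of) oracle programs which, run with the characteristic
function of `A` as oracle, halt on input `0` with output `i`. -/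
def Hset (A : Set ℕ) (i : ℕ) : Set ℕ := {e : ℕ | (i : ℕ) ∈ phi (chi A) e 0}


/-!
To reduce `{P ⊗ Q, Q ⊗ P}` to `{P, Q}`, Nimue first plays the oracle set of the left
factor of the secret and then that of the right factor, and Arthur pairs the two answers.
To reduce `{P, Q}` to `{P ⊗ Q, Q ⊗ P}`, Nimue plays the product whose left factor is the
secret, and Arthur unpairs the single answer and keeps its left component.
-/

def askOnce (f : ℕ → ℕ) : List ℕ →. Option ℕ :=
  fun l => Part.some (l[0]?.map f)

def askTwice (g : ℕ → ℕ → ℕ) : List ℕ →. Option ℕ :=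
  fun l => Part.some (l[0]?.bind fun a => l[1]?.map (g a))

theorem askOnce_partrec {f : ℕ → ℕ} (hf : Computable f) : Partrec (askOnce f) :=
  (Computable.option_map (Computable.list_getElem?.comp .id (.const 0))
    (hf.comp .snd).to₂).partrec

theorem askTwice_partrec {g : ℕ → ℕ → ℕ} (hg : Computable₂ g) : Partrec (askTwice g) :=
  (Computable.option_bind (Computable.list_getElem?.comp .id (.const 0))
    (Computable.option_map (Computable.list_getElem?.comp .fst (.const 1))
      (hg.comp (Computable.snd.comp .fst) .snd).to₂).to₂).partrec

@[simp]
theorem prefixList_zero (s : ℕ → ℕ) : prefixList s 0 = [] := rfl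

@[simp]
theorem prefixList_one (s : ℕ → ℕ) : prefixList s 1 = [s 0] := rfl

@[simp]
theorem prefixList_two (s : ℕ → ℕ) : prefixList s 2 = [s 0, s 1] := rfl

theorem winning_askOnce {ℱ 𝒢 : Set (Set ℕ)} {f : ℕ → ℕ}
    (h : ∀ F ∈ ℱ, ∃ G ∈ 𝒢, Set.MapsTo f G F) : ∃ ν, Winning ℱ 𝒢 (askOnce f) ν := by
  choose! G hG hmaps using h
  refine ⟨fun F _ => G F, fun F hF _ => hG F hF, fun F hF s hs => ?_⟩
  refine ⟨1, fun _ _ => trivial, ?_, f (s 0), hmaps F hF (hs 0), by simp [askOnce]⟩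
  intro i hi
  obtain rfl : i = 0 := Nat.lt_one_iff.mp hi
  simp [askOnce]

theorem winning_askTwice {ℱ 𝒢 : Set (Set ℕ)} {g : ℕ → ℕ → ℕ}
    (h : ∀ F ∈ ℱ, ∃ A ∈ 𝒢, ∃ B ∈ 𝒢, ∀ a ∈ A, ∀ b ∈ B, g a b ∈ F) :
    ∃ ν, Winning ℱ 𝒢 (askTwice g) ν := by
  choose! A hA B hB hg using h
  refine ⟨fun F l => if l = [] then A F else B F, fun F hF l => ?_, fun F hF s hs => ?_⟩
  · dsimp only
    split_ifs
    exacts [hA F hF, hB F hF]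
  have h0 : s 0 ∈ A F := by simpa using hs 0
  have h1 : s 1 ∈ B F := by simpa using hs 1
  refine ⟨2, fun _ _ => trivial, ?_, g (s 0) (s 1), hg F hF _ h0 _ h1, by simp [askTwice]⟩
  intro i hi
  interval_cases i <;> simp [askTwice]

theorem pair_mem_tensor {A B : Set ℕ} {a b : ℕ} (ha : a ∈ A) (hb : b ∈ B) :
    Nat.pair a b ∈ A ⊗ B :=
  ⟨a, ha, b, hb, rfl⟩

theorem mapsTo_unpair_fst_tensor (A B : Set ℕ) : Set.MapsTo (fun x => x.unpair.1) (A ⊗ B) A := by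
  rintro _ ⟨a, ha, b, -, rfl⟩
  simpa using ha

theorem stmt12_general (P Q : Set ℕ) :
    (∃ (σ : List ℕ →. Option ℕ) (ν : Set ℕ → List ℕ → Set ℕ),
      Partrec σ ∧ Winning {P ⊗ Q, Q ⊗ P} {P, Q} σ ν) ∧
    (∃ (σ : List ℕ →. Option ℕ) (ν : Set ℕ → List ℕ → Set ℕ),
      Partrec σ ∧ Winning {P, Q} {P ⊗ Q, Q ⊗ P} σ ν) := by
  constructor
  · obtain ⟨ν, hν⟩ := winning_askTwice (ℱ := {P ⊗ Q, Q ⊗ P}) (𝒢 := {P, Q}) (g := Nat.pair) <| by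
      rintro F (rfl | rfl)
      exacts [⟨P, by simp, Q, by simp, fun _ ha _ hb => pair_mem_tensor ha hb⟩,
        ⟨Q, by simp, P, by simp, fun _ ha _ hb => pair_mem_tensor ha hb⟩]
    exact ⟨_, ν, askTwice_partrec Primrec₂.natPair.to_comp, hν⟩
  · obtain ⟨ν, hν⟩ := winning_askOnce (ℱ := {P, Q}) (𝒢 := {P ⊗ Q, Q ⊗ P})
        (f := fun x => x.unpair.1) <| by
      rintro F (rfl | rfl)
      exacts [⟨_, by simp, mapsTo_unpair_fst_tensor F Q⟩,
        ⟨_, by simp, mapsTo_unpair_fst_tensor F P⟩]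
    exact ⟨_, ν, askOnce_partrec (Computable.fst.comp .unpair), hν⟩

theorem stmt12 (P Q : Set ℕ) (hdisj : Disjoint P Q) (hP : P.Nonempty) (hQ : Q.Nonempty) :
    (∃ (σ : List ℕ →. Option ℕ) (ν : Set ℕ → List ℕ → Set ℕ),
      Partrec σ ∧ Winning {P ⊗ Q, Q ⊗ P} {P, Q} σ ν) ∧
    (∃ (σ : List ℕ →. Option ℕ) (ν : Set ℕ → List ℕ → Set ℕ),
      Partrec σ ∧ Winning {P, Q} {P ⊗ Q, Q ⊗ P} σ ν) :=
  stmt12_general P Q
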